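/- arXiv:2302.03563 — 3 statements merged into one kernel-verified Lean document; each statement's English description precedes it below -/
import Mathlib

section
/- Let (F(x), σ) be a difference field extension of a difference field (F, σ) where F(x) is a rational function field over F, σ(x) = x + 1 (more generally σ(x) - x ∈ F), and σ restricts to F. Then every nonzero f ∈ F[x] has period at most 1; that is, if there exists n ≥ 1 with σ^n(f)/f ∈ F, then already σ(f)/f ∈ F. -/
/-- In a Σ-extension F(x) of F (σ(x) - x ∈ F), every nonzero polynomial f ∈ F[x]
has period at most 1: if σ^n(f)/f ∈ F for some n ≥ 1 then already σ(f)/f ∈ F. -/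
theorem stmt1 {F : Type*} [Field F] (σ : RatFunc F ≃+* RatFunc F)
    (hF : ∀ a : F, ∃ b : F, σ (RatFunc.C a) = RatFunc.C b)
    (hx : ∃ c : F, σ RatFunc.X = RatFunc.X + RatFunc.C c)
    (hconst : ∀ h : RatFunc F, σ h = h → ∃ a : F, h = RatFunc.C a)
    (f : Polynomial F) (hf : f ≠ 0)
    (hper : ∃ n : ℕ, 1 ≤ n ∧ ∃ a : F,
      (⇑σ)^[n] (algebraMap (Polynomial F) (RatFunc F) f)
        = RatFunc.C a * algebraMap (Polynomial F) (RatFunc F) f) :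
    ∃ a : F, σ (algebraMap (Polynomial F) (RatFunc F) f)
      = RatFunc.C a * algebraMap (Polynomial F) (RatFunc F) f := by
  classical
  obtain ⟨c, hc⟩ := hx
  set τf : F → F := fun a => (hF a).choose with hτf
  have hτspec : ∀ a : F, σ (RatFunc.C a) = RatFunc.C (τf a) :=
    fun a => (hF a).choose_spec
  have hCinj : Function.Injective (RatFunc.C : F →+* RatFunc F) := RingHom.injective _
  have h1 : τf 1 = 1 := hCinj (by rw [← hτspec]; simp)
  have h0 : τf 0 = 0 := hCinj (by rw [← hτspec]; simp)
  have hm : ∀ x y, τf (x * y) = τf x * τf y := fun x y => hCinj (by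
    rw [← hτspec, map_mul RatFunc.C, map_mul σ, hτspec, hτspec, ← map_mul RatFunc.C])
  have ha : ∀ x y, τf (x + y) = τf x + τf y := fun x y => hCinj (by
    rw [← hτspec, map_add RatFunc.C, map_add σ, hτspec, hτspec, ← map_add RatFunc.C])
  let τ : F →+* F := ⟨⟨⟨τf, h1⟩, hm⟩, h0, ha⟩
  have hτ : ∀ a : F, σ (RatFunc.C a) = RatFunc.C (τ a) := hτspec
  have hτinj : Function.Injective τ := RingHom.injective τ
  let P : Polynomial F →+* Polynomial F :=
    Polynomial.eval₂RingHom ((Polynomial.C : F →+* Polynomial F).comp τ)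
      (Polynomial.X + Polynomial.C c)
  have hkey : ∀ p : Polynomial F,
      σ (algebraMap (Polynomial F) (RatFunc F) p)
        = algebraMap (Polynomial F) (RatFunc F) (P p) := by
    intro p
    have h : (σ : RatFunc F →+* RatFunc F).comp (algebraMap (Polynomial F) (RatFunc F))
        = (algebraMap (Polynomial F) (RatFunc F)).comp P := by
      apply Polynomial.ringHom_ext
      · intro a
        simp [P, RatFunc.algebraMap_C, hτ]
      · simp [P, RatFunc.algebraMap_X, RatFunc.algebraMap_C, hc]
    exact congrFun (congrArg (fun h => h.toFun) h) p
  have hPc : ∀ p : Polynomial F,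
      P p = (p.map τ).comp (Polynomial.X + Polynomial.C c) := by
    intro p
    simp [P, Polynomial.comp, Polynomial.eval₂_map]
  have hdeg : ∀ p : Polynomial F, (P p).natDegree = p.natDegree := by
    intro p
    rw [hPc, Polynomial.natDegree_comp, Polynomial.natDegree_X_add_C,
      Polynomial.natDegree_map_eq_of_injective hτinj, mul_one]
  have hlead : ∀ p : Polynomial F, (P p).leadingCoeff = τ p.leadingCoeff := by
    intro p
    rw [hPc, Polynomial.leadingCoeff_comp (by simp [Polynomial.natDegree_X_add_C]),
      Polynomial.leadingCoeff_map, (Polynomial.monic_X_add_C c).leadingCoeff,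
      one_pow, mul_one]
  have halginj : Function.Injective (algebraMap (Polynomial F) (RatFunc F)) :=
    IsFractionRing.injective _ _
  have hP0 : ∀ p : Polynomial F, p ≠ 0 → P p ≠ 0 := by
    intro p hp h
    apply hp
    have : p.natDegree = 0 ∧ p.leadingCoeff = 0 := by
      constructor
      · rw [← hdeg p, h, Polynomial.natDegree_zero]
      · have := hlead p
        rw [h, Polynomial.leadingCoeff_zero] at this
        exact hτinj (by simpa using this.symm)
    exact Polynomial.leadingCoeff_eq_zero.mp this.2
  -- iterate facts
  have hiter : ∀ (k : ℕ) (p : Polynomial F),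
      (⇑σ)^[k] (algebraMap (Polynomial F) (RatFunc F) p)
        = algebraMap (Polynomial F) (RatFunc F) ((⇑P)^[k] p) := by
    intro k
    induction k with
    | zero => intro p; simp
    | succ k ih =>
      intro p
      rw [Function.iterate_succ_apply, Function.iterate_succ_apply, hkey, ih]
  have hPkne : ∀ (k : ℕ), (⇑P)^[k] f ≠ 0 := by
    intro k
    induction k with
    | zero => simpa
    | succ k ih => rw [Function.iterate_succ_apply']; exact hP0 _ ih
  have hPkdeg : ∀ (k : ℕ), ((⇑P)^[k] f).natDegree = f.natDegree := by
    intro k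
    induction k with
    | zero => simp
    | succ k ih => rw [Function.iterate_succ_apply', hdeg, ih]
  obtain ⟨n, hn1, a, hna⟩ := hper
  -- σ^n(f) = C a * f  gives  P^[n] f = C a * f  in the polynomial ring
  have hpoly : (⇑P)^[n] f = Polynomial.C a * f := by
    apply halginj
    rw [← hiter, hna]
    rw [map_mul, RatFunc.algebraMap_C]
  -- the product g
  set g : Polynomial F := ∏ i ∈ Finset.range n, (⇑P)^[i] f with hg
  have hgne : g ≠ 0 := Finset.prod_ne_zero_iff.mpr fun i _ => hPkne i
  have hPg : P g * f = (Polynomial.C a * g) * f := by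
    have e1 : P g = ∏ i ∈ Finset.range n, (⇑P)^[i + 1] f := by
      rw [hg, map_prod]
      exact Finset.prod_congr rfl fun i _ => (Function.iterate_succ_apply' (⇑P) i f).symm
    calc P g * f = ∏ i ∈ Finset.range (n + 1), (⇑P)^[i] f := by
          rw [e1, Finset.prod_range_succ', Function.iterate_zero_apply]
      _ = g * (⇑P)^[n] f := by rw [Finset.prod_range_succ, hg]
      _ = (Polynomial.C a * g) * f := by rw [hpoly]; ring
  have hPg' : P g = Polynomial.C a * g := mul_right_cancel₀ hf hPg
  -- leading coefficients : τ L = a * L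
  set L : F := g.leadingCoeff with hL
  have hLne : L ≠ 0 := Polynomial.leadingCoeff_ne_zero.mpr hgne
  have hτL : τ L = a * L := by
    have := hlead g
    rw [hPg', Polynomial.leadingCoeff_mul, Polynomial.leadingCoeff_C] at this
    exact this.symm ▸ rfl
  have hane : a ≠ 0 := by
    intro h
    rw [h, zero_mul] at hτL
    exact hLne (hτinj (by simpa using hτL))
  -- the σ-fixed element
  set u : RatFunc F := algebraMap (Polynomial F) (RatFunc F) g / RatFunc.C L with hu
  have hCLne : (RatFunc.C L : RatFunc F) ≠ 0 := by
    simpa using fun h => hLne (hCinj (by simpa using h))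
  have hCane : (RatFunc.C a : RatFunc F) ≠ 0 := by
    simpa using fun h => hane (hCinj (by simpa using h))
  have hσu : σ u = u := by
    rw [hu, map_div₀, hkey, hτ, hτL, hPg', map_mul, map_mul RatFunc.C,
      RatFunc.algebraMap_C, mul_div_mul_left _ _ hCane]
  obtain ⟨b, hb⟩ := hconst u hσu
  have hgC : g = Polynomial.C (L * b) := by
    apply halginj
    have : algebraMap (Polynomial F) (RatFunc F) g = RatFunc.C L * RatFunc.C b := by
      rw [← hb, hu, mul_div_cancel₀ _ hCLne]
    rw [this, ← map_mul RatFunc.C, RatFunc.algebraMap_C]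
  have hgdeg : g.natDegree = 0 := by rw [hgC]; exact Polynomial.natDegree_C _
  have hgdeg' : g.natDegree = n * f.natDegree := by
    rw [hg, Polynomial.natDegree_prod _ _ fun i _ => hPkne i]
    simp [hPkdeg, Finset.sum_const, Finset.card_range]
  have hfdeg : f.natDegree = 0 := by
    rcases Nat.mul_eq_zero.mp (hgdeg'.symm.trans hgdeg) with h | h
    · omega
    · exact h
  -- conclude
  obtain ⟨e, he⟩ : ∃ e : F, f = Polynomial.C e :=
    ⟨f.coeff 0, Polynomial.eq_C_of_natDegree_eq_zero hfdeg⟩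
  have hene : e ≠ 0 := fun h => hf (by rw [he, h, map_zero])
  refine ⟨τ e / e, ?_⟩
  rw [he, RatFunc.algebraMap_C, hτ, ← map_mul RatFunc.C]
  congr 1
  field_simp
end

section
/- Let (F(x), σ) be a ΠΣ-field extension of (F, σ) with σ(x)/x ∈ F* (Π-case), and let f ∈ F[x] be nonzero with per(f) > 0. Then f = c · x^m for some c ∈ F* and m ∈ ℕ. -/
/-!
On `F`, `σ^n` restricts to an endomorphism `τ`, and `σ^n(x) = v x` with `v ∈ F*`, so `σ^n` acts on
polynomials coefficientwise: `σ^n(∑ fⱼ xʲ) = ∑ τ(fⱼ) vʲ xʲ`. Hence `σ^n(f) = a f` forces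
`τ(fⱼ) vʲ = a fⱼ` for every `j`. If `f` had two nonzero coefficients `fᵢ`, `fⱼ` with `i < j`, the
monomial `h = (fⱼ / fᵢ) x^(j - i)` would satisfy `σ^n(h) = h`; then `h σ(h) ⋯ σ^(n-1)(h)` is fixed
by `σ`, hence a constant, although it is a monomial of degree `n (j - i) > 0`.
-/

open Finset Function Polynomial

theorem map_prod_range_iterate_of_isPeriodicPt {M G : Type*} [CommMonoid M] [FunLike G M M]
    [MonoidHomClass G M M] (σ : G) {n : ℕ} {h : M} (hper : IsPeriodicPt σ n h) :
    σ (∏ k ∈ range n, σ^[k] h) = ∏ k ∈ range n, σ^[k] h := by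
  rcases n with _ | n
  · simp
  simp only [map_prod, ← iterate_succ_apply' σ]
  rw [prod_range_succ, prod_range_succ' (fun k => σ^[k] h), show σ^[n + 1] h = h from hper,
    iterate_zero_apply]

namespace RatFunc

variable {F : Type*} [Field F]

/-- The shape of `σ` on `F(x)` in a Π-extension of `F`. -/
def IsPiHom (ρ : RatFunc F →+* RatFunc F) : Prop :=
  (∀ a : F, ∃ b : F, ρ (C a) = C b) ∧ ∃ u : F, u ≠ 0 ∧ ρ X = C u * X

lemma intDegree_C_mul_X_pow {c : F} (hc : c ≠ 0) (d : ℕ) : intDegree (C c * X ^ d) = d := by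
  rw [← algebraMap_C, ← algebraMap_X, ← map_pow, ← map_mul, intDegree_polynomial,
    natDegree_C_mul_X_pow d c hc]

lemma map_C_mul_X_pow {ρ : RatFunc F →+* RatFunc F} {τ : F → F} {u : F}
    (hC : ∀ a, ρ (C a) = C (τ a)) (hX : ρ X = C u * X) (c : F) (d : ℕ) :
    ρ (C c * X ^ d) = C (τ c * u ^ d) * X ^ d := by
  rw [map_mul, map_pow, hC, hX, mul_pow, map_mul, map_pow, mul_assoc]

lemma map_algebraMap {ρ : RatFunc F →+* RatFunc F} {τ : F →+* F} {u : F}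
    (hC : ∀ a, ρ (C a) = C (τ a)) (hX : ρ X = C u * X) (f : F[X]) :
    ρ (algebraMap F[X] (RatFunc F) f) =
      algebraMap F[X] (RatFunc F) ((f.map τ).comp (Polynomial.C u * Polynomial.X)) := by
  have : ρ.comp (algebraMap F[X] (RatFunc F)) = (algebraMap F[X] (RatFunc F)).comp
      ((Polynomial.compRingHom (Polynomial.C u * Polynomial.X)).comp (Polynomial.mapRingHom τ)) :=
    ringHom_ext (fun a => by simp [hC]) (by simp [hX])
  exact RingHom.congr_fun this f

lemma coeff_mul_pow_eq_of_map_eq_C_mul {ρ : RatFunc F →+* RatFunc F} {τ : F →+* F} {u : F}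
    (hC : ∀ a, ρ (C a) = C (τ a)) (hX : ρ X = C u * X) {f : F[X]} {a : F}
    (hf : ρ (algebraMap F[X] (RatFunc F) f) = C a * algebraMap F[X] (RatFunc F) f) (j : ℕ) :
    τ (f.coeff j) * u ^ j = a * f.coeff j := by
  rw [map_algebraMap hC hX, ← algebraMap_C, ← map_mul] at hf
  simpa using congr_arg (coeff · j) (algebraMap_injective F hf)

lemma map_C_div_mul_X_pow_of_map_eq_C_mul {ρ : RatFunc F →+* RatFunc F} {τ : F →+* F} {u : F}
    (hC : ∀ a, ρ (C a) = C (τ a)) (hX : ρ X = C u * X) (hu : u ≠ 0) {f : F[X]} {a : F}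
    (hf : ρ (algebraMap F[X] (RatFunc F) f) = C a * algebraMap F[X] (RatFunc F) f)
    {i j : ℕ} (hi : f.coeff i ≠ 0) (hij : i ≤ j) :
    ρ (C (f.coeff j / f.coeff i) * X ^ (j - i)) = C (f.coeff j / f.coeff i) * X ^ (j - i) := by
  obtain ⟨d, rfl⟩ := Nat.exists_eq_add_of_le hij
  have hcoeff_i := coeff_mul_pow_eq_of_map_eq_C_mul hC hX hf i
  have hcoeff_j := coeff_mul_pow_eq_of_map_eq_C_mul hC hX hf (i + d)
  have hτi : τ (f.coeff i) ≠ 0 := (map_ne_zero τ).2 hi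
  rw [map_C_mul_X_pow hC hX, Nat.add_sub_cancel_left, map_div₀]
  congr 2
  field_simp
  refine mul_right_cancel₀ (pow_ne_zero i hu) ?_
  linear_combination f.coeff i * hcoeff_j - f.coeff (i + d) * hcoeff_i

namespace IsPiHom

variable {ρ ρ' : RatFunc F →+* RatFunc F}

lemma comp (h : IsPiHom ρ) (h' : IsPiHom ρ') : IsPiHom (ρ.comp ρ') := by
  obtain ⟨hC, u, hu, hX⟩ := h
  obtain ⟨hC', u', hu', hX'⟩ := h'
  refine ⟨fun a => ?_, ?_⟩
  · obtain ⟨b, hb⟩ := hC' a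
    obtain ⟨b', hb'⟩ := hC b
    exact ⟨b', by simp [hb, hb']⟩
  · obtain ⟨b, hb⟩ := hC u'
    have hb0 : b ≠ 0 := by
      rintro rfl
      simp_all
    exact ⟨b * u, mul_ne_zero hb0 hu, by simp [hX', hb, hX, mul_assoc]⟩

lemma pow (h : IsPiHom ρ) : ∀ n : ℕ, IsPiHom (ρ ^ n)
  | 0 => ⟨fun a => ⟨a, rfl⟩, 1, one_ne_zero, by simp⟩
  | n + 1 => by rw [pow_succ, RingHom.mul_def]; exact (h.pow n).comp h

lemma exists_ringHom (h : IsPiHom ρ) : ∃ τ : F →+* F, ∀ a, ρ (C a) = C (τ a) := by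
  choose τ hτ using h.1
  refine ⟨{ toFun := τ, map_one' := ?_, map_mul' := ?_, map_zero' := ?_, map_add' := ?_ }, hτ⟩ <;>
    intros <;> apply C_injective <;> simp [← hτ]

lemma exists_map_C_mul_X_pow (h : IsPiHom ρ) {c : F} (hc : c ≠ 0) (d : ℕ) :
    ∃ e : F, e ≠ 0 ∧ ρ (C c * X ^ d) = C e * X ^ d := by
  obtain ⟨τ, hτ⟩ := h.exists_ringHom
  obtain ⟨u, hu, hX⟩ := h.2
  exact ⟨τ c * u ^ d, mul_ne_zero ((map_ne_zero τ).2 hc) (pow_ne_zero d hu),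
    map_C_mul_X_pow hτ hX c d⟩

lemma not_isPeriodicPt_C_mul_X_pow (h : IsPiHom ρ) (hconst : ∀ g, ρ g = g → ∃ a, g = C a)
    {c : F} (hc : c ≠ 0) {d n : ℕ} (hd : d ≠ 0) (hn : n ≠ 0) :
    ¬ IsPeriodicPt ρ n (C c * X ^ d) := by
  intro hper
  choose e he hρe using fun k => (h.pow k).exists_map_C_mul_X_pow hc d
  have hnorm : ∏ k ∈ range n, ρ^[k] (C c * X ^ d) = C (∏ k ∈ range n, e k) * X ^ (d * n) := by
    simp only [← RingHom.coe_pow, hρe, prod_mul_distrib, prod_const, card_range, map_prod,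
      pow_mul]
  obtain ⟨b, hb⟩ := hconst _ (map_prod_range_iterate_of_isPeriodicPt ρ hper)
  have hdeg := congr_arg intDegree hb
  rw [hnorm, intDegree_C_mul_X_pow (prod_ne_zero_iff.2 fun k _ => he k), intDegree_C] at hdeg
  exact mul_ne_zero hd hn (by exact_mod_cast hdeg)

end IsPiHom

end RatFunc

/-- In a Π-extension F(x) of F (σ(x)/x ∈ F*), a nonzero polynomial f ∈ F[x] with
positive period must be of the form c·x^m with c ∈ F* and m ∈ ℕ. -/
theorem stmt2 {F : Type*} [Field F] (σ : RatFunc F ≃+* RatFunc F)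
    (hF : ∀ a : F, ∃ b : F, σ (RatFunc.C a) = RatFunc.C b)
    (hx : ∃ u : F, u ≠ 0 ∧ σ RatFunc.X = RatFunc.C u * RatFunc.X)
    (hconst : ∀ h : RatFunc F, σ h = h → ∃ a : F, h = RatFunc.C a)
    (f : Polynomial F) (hf : f ≠ 0)
    (hper : ∃ n : ℕ, 1 ≤ n ∧ ∃ a : F,
      (⇑σ)^[n] (algebraMap (Polynomial F) (RatFunc F) f)
        = RatFunc.C a * algebraMap (Polynomial F) (RatFunc F) f) :
    ∃ (c : F) (m : ℕ), c ≠ 0 ∧ f = Polynomial.C c * Polynomial.X ^ m := by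
  set ρ : RatFunc F →+* RatFunc F := σ.toRingHom
  have hρ : RatFunc.IsPiHom ρ := ⟨hF, hx⟩
  obtain ⟨n, hn, a, ha⟩ := hper
  rw [← RingEquiv.coe_toRingHom, ← RingHom.coe_pow] at ha
  obtain ⟨τ, hτ⟩ := (hρ.pow n).exists_ringHom
  obtain ⟨v, hv, hvX⟩ := (hρ.pow n).2
  have hgap : ∀ i j, f.coeff i ≠ 0 → f.coeff j ≠ 0 → ¬ i < j := by
    intro i j hi hj hij
    refine hρ.not_isPeriodicPt_C_mul_X_pow hconst (div_ne_zero hj hi) (d := j - i) (n := n)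
      (by omega) (by omega) ?_
    rw [IsPeriodicPt, IsFixedPt, ← RingHom.coe_pow]
    exact RatFunc.map_C_div_mul_X_pow_of_map_eq_C_mul hτ hvX hv ha hi hij.le
  have hsupport : #f.support ≤ 1 := card_le_one.2 fun i hi j hj => by
    rw [mem_support_iff] at hi hj
    exact le_antisymm (not_lt.1 (hgap j i hj hi)) (not_lt.1 (hgap i j hi hj))
  obtain ⟨m, c, hc, hfcm⟩ :=
    card_support_eq_one.1 (hsupport.antisymm (card_pos.2 (nonempty_support_iff.2 hf)))
  exact ⟨c, m, hc, hfcm⟩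
end

section
/- Let (F(x), σ) be a ΠΣ-field extension of (F, σ) and let g ∈ F(x). Write g = a/(b·c) in lowest terms with a, b·c ∈ F[x], where c collects exactly the monic irreducible period-0 factors of the denominator of x-degree greater than d, and b has only irreducible factors of degree at most d or period 1. If q ∈ F[x] is monic irreducible of period 0 with deg(q) > d such that q divides the denominator of g but σ(q) does not, then σ(q) divides the denominator of σ(g) − g. -/
open Polynomial

theorem aux_tau {F : Type*} [Field F] (σ : RingAut (RatFunc F))
    (hF : ∀ a : F, ∃ b : F, σ (RatFunc.C a) = RatFunc.C b)
    (hpisigma : (∃ c : F, σ RatFunc.X = RatFunc.X + RatFunc.C c) ∨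
      (∃ u : F, u ≠ 0 ∧ σ RatFunc.X = RatFunc.C u * RatFunc.X)) :
    ∃ τ : Polynomial F ≃+* Polynomial F,
      (∀ f : Polynomial F, σ (algebraMap (Polynomial F) (RatFunc F) f)
          = algebraMap (Polynomial F) (RatFunc F) (τ f)) ∧
      (∀ f : Polynomial F, (τ f).natDegree = f.natDegree) := by
  classical
  have hCinj : Function.Injective fun a : F => RatFunc.C a := by
    intro a b h
    have h' : algebraMap (Polynomial F) (RatFunc F) (C a)
        = algebraMap (Polynomial F) (RatFunc F) (C b) := by
      simpa [RatFunc.algebraMap_C] using h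
    exact Polynomial.C_injective (RatFunc.algebraMap_injective F h')
  set t : F → F := fun a => (hF a).choose with ht_def
  have ht : ∀ a, σ (RatFunc.C a) = RatFunc.C (t a) := fun a => (hF a).choose_spec
  let τ₀ : F →+* F :=
    { toFun := t
      map_one' := hCinj (by show RatFunc.C (t 1) = RatFunc.C 1; rw [← ht]; simp)
      map_zero' := hCinj (by show RatFunc.C (t 0) = RatFunc.C 0; rw [← ht]; simp)
      map_add' := fun a b => hCinj (by
        show RatFunc.C (t (a + b)) = RatFunc.C (t a + t b)
        rw [← ht, map_add, map_add, map_add, ht, ht])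
      map_mul' := fun a b => hCinj (by
        show RatFunc.C (t (a * b)) = RatFunc.C (t a * t b)
        rw [← ht, map_mul, map_mul, map_mul, ht, ht]) }
  have hτ₀ : ∀ a, σ (RatFunc.C a) = RatFunc.C (τ₀ a) := ht
  obtain ⟨p, pinv, hpX, hpdeg, hinv⟩ :
      ∃ p pinv : Polynomial F, algebraMap (Polynomial F) (RatFunc F) p = σ RatFunc.X ∧
        p.natDegree = 1 ∧ pinv.comp p = X := by
    rcases hpisigma with ⟨c, hc⟩ | ⟨u, hu, huX⟩
    · refine ⟨X + C c, X - C c, by simp [hc, RatFunc.algebraMap_X, RatFunc.algebraMap_C],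
        natDegree_X_add_C c, by simp [sub_comp]⟩
    · refine ⟨C u * X, C u⁻¹ * X, by simp [huX, RatFunc.algebraMap_X, RatFunc.algebraMap_C],
        natDegree_C_mul_X u hu, ?_⟩
      rw [mul_comp, C_comp, X_comp, ← mul_assoc, ← C_mul, inv_mul_cancel₀ hu, C_1, one_mul]
  let τ : Polynomial F →+* Polynomial F := (eval₂RingHom (C : F →+* Polynomial F) p).comp
    (mapRingHom τ₀)
  have hτdef : ∀ f : Polynomial F, τ f = (f.map τ₀).comp p := fun f => rfl
  have hστ : ∀ f : Polynomial F, σ (algebraMap (Polynomial F) (RatFunc F) f)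
      = algebraMap (Polynomial F) (RatFunc F) (τ f) := by
    have hhom : ((σ : RatFunc F →+* RatFunc F).comp (algebraMap (Polynomial F) (RatFunc F)))
        = ((algebraMap (Polynomial F) (RatFunc F)).comp τ) := by
      apply Polynomial.ringHom_ext
      · intro a
        simp only [RingHom.coe_comp, Function.comp_apply, RatFunc.algebraMap_C]
        show σ (RatFunc.C a) = _
        rw [hτ₀, hτdef, map_C, C_comp, RatFunc.algebraMap_C]
      · simp only [RingHom.coe_comp, Function.comp_apply, RatFunc.algebraMap_X]
        show σ RatFunc.X = _
        rw [hτdef, map_X, X_comp, hpX]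
    intro f
    exact RingHom.congr_fun hhom f
  have hτ₀inj : Function.Injective τ₀ := τ₀.injective
  have hdegτ : ∀ f : Polynomial F, (τ f).natDegree = f.natDegree := by
    intro f
    rw [hτdef, natDegree_comp, hpdeg, mul_one, natDegree_map_eq_of_injective hτ₀inj]
  have hτinj : Function.Injective τ := by
    intro f g h
    have h2 : σ (algebraMap (Polynomial F) (RatFunc F) f)
        = σ (algebraMap (Polynomial F) (RatFunc F) g) := by rw [hστ, hστ, h]
    exact RatFunc.algebraMap_injective F (σ.injective h2)
  have hτ₀surj : Function.Surjective τ₀ := by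
    intro b
    rcases eq_or_ne b 0 with rfl | hb
    · exact ⟨0, map_zero τ₀⟩
    set y := σ.symm (RatFunc.C b) with hy
    have hσy : σ y = RatFunc.C b := σ.apply_symm_apply _
    have h1 : algebraMap (Polynomial F) (RatFunc F) (τ y.num)
        / algebraMap (Polynomial F) (RatFunc F) (τ y.denom) = RatFunc.C b := by
      rw [← hστ, ← hστ, ← map_div₀, RatFunc.num_div_denom, hσy]
    have hτD0 : algebraMap (Polynomial F) (RatFunc F) (τ y.denom) ≠ 0 := by
      rw [Ne, ← map_zero (algebraMap (Polynomial F) (RatFunc F))]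
      intro h0
      exact RatFunc.denom_ne_zero y
        (hτinj ((RatFunc.algebraMap_injective F h0).trans (map_zero τ).symm))
    have h2 : τ y.num = Polynomial.C b * τ y.denom := by
      apply RatFunc.algebraMap_injective F
      rw [map_mul, RatFunc.algebraMap_C, ← h1, div_mul_cancel₀ _ hτD0]
    have hcop : IsCoprime (τ y.num) (τ y.denom) := (RatFunc.isCoprime_num_denom y).map τ
    have hdvd : τ y.denom ∣ τ y.num := ⟨Polynomial.C b, by rw [h2, mul_comm]⟩
    have hunit : IsUnit (τ y.denom) := hcop.symm.isUnit_of_dvd hdvd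
    have hD1 : y.denom.natDegree = 0 := by
      have h3 := natDegree_eq_zero_of_isUnit hunit
      rwa [hdegτ] at h3
    have hD : y.denom = 1 := (RatFunc.monic_denom y).natDegree_eq_zero.mp hD1
    have hN0 : (y.num).natDegree = 0 := by
      have h4 : (τ y.num).natDegree = 0 := by
        rw [h2, hD, map_one, mul_one, natDegree_C]
      rwa [hdegτ] at h4
    have hN : y.num = C (y.num.coeff 0) := eq_C_of_natDegree_eq_zero hN0
    refine ⟨y.num.coeff 0, ?_⟩
    have h5 : τ y.num = C b := by rw [h2, hD, map_one, mul_one]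
    have h6 : τ y.num = C (τ₀ (y.num.coeff 0)) := by
      rw [hτdef]
      conv_lhs => rw [hN]
      rw [map_C, C_comp]
    exact Polynomial.C_injective (h6.symm.trans h5)
  let e : F ≃+* F := RingEquiv.ofBijective τ₀ ⟨hτ₀inj, hτ₀surj⟩
  have hτsurj : Function.Surjective τ := by
    intro h
    refine ⟨(h.comp pinv).map (e.symm : F →+* F), ?_⟩
    rw [hτdef, map_map]
    have hid : (τ₀.comp (e.symm : F →+* F)) = RingHom.id F := by
      ext a
      exact e.apply_symm_apply a
    rw [hid, map_id, comp_assoc, hinv, comp_X]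
  exact ⟨RingEquiv.ofBijective τ ⟨hτinj, hτsurj⟩, hστ, hdegτ⟩

/-- If q is monic irreducible of period 0 with deg q > d, q divides den(g) but
σ(q) does not, then σ(q) divides den(σ(g) − g). -/
theorem stmt16 {F : Type*} [Field F] (σ : RingAut (RatFunc F))
    (hF : ∀ a : F, ∃ b : F, σ (RatFunc.C a) = RatFunc.C b)
    (hpisigma : (∃ c : F, σ RatFunc.X = RatFunc.X + RatFunc.C c) ∨
      (∃ u : F, u ≠ 0 ∧ σ RatFunc.X = RatFunc.C u * RatFunc.X))
    (hconst : ∀ h : RatFunc F, σ h = h → ∃ a : F, h = RatFunc.C a)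
    (d : ℕ) (q : Polynomial F) (hmonic : q.Monic) (hirr : Irreducible q)
    (hdeg : d < q.natDegree)
    (hper0 : ∀ n : ℕ, 1 ≤ n → ∀ a : F,
      (σ ^ (n : ℤ)) (algebraMap (Polynomial F) (RatFunc F) q)
        ≠ RatFunc.C a * algebraMap (Polynomial F) (RatFunc F) q)
    (qs : Polynomial F) (hqsmonic : qs.Monic)
    (hqs : ∃ a : F, a ≠ 0 ∧
      σ (algebraMap (Polynomial F) (RatFunc F) q)
        = RatFunc.C a * algebraMap (Polynomial F) (RatFunc F) qs)
    (g : RatFunc F) (hq_den : q ∣ g.denom) (hqs_den : ¬ qs ∣ g.denom) :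
    qs ∣ (σ g - g).denom := by
  classical
  obtain ⟨τ, hστ, hdegτ⟩ := aux_tau σ hF hpisigma
  obtain ⟨a, ha, haq⟩ := hqs
  have hτq : τ q = Polynomial.C a * qs := by
    apply RatFunc.algebraMap_injective F
    rw [← hστ, haq, map_mul, RatFunc.algebraMap_C]
  have hτq_irr : Irreducible (τ q) := (MulEquiv.irreducible_iff (τ : Polynomial F ≃* Polynomial F)).mpr hirr
  have hunit : IsUnit (Polynomial.C a) := Polynomial.isUnit_C.mpr ha.isUnit
  have hassoc : Associated qs (τ q) := by
    obtain ⟨v, hv⟩ := hunit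
    exact ⟨v, by rw [hv, hτq]; ring⟩
  have hqs_irr : Irreducible qs := hassoc.symm.irreducible hτq_irr
  have hqs_prime : Prime qs := hqs_irr.prime
  have hqs_τD : qs ∣ τ g.denom :=
    dvd_trans (Dvd.intro_left (Polynomial.C a) hτq.symm) (map_dvd (τ : Polynomial F →+* Polynomial F) hq_den)
  have hσg : σ g = algebraMap (Polynomial F) (RatFunc F) (τ g.num)
      / algebraMap (Polynomial F) (RatFunc F) (τ g.denom) := by
    rw [← hστ, ← hστ, ← map_div₀, RatFunc.num_div_denom]
  have hτD0 : τ g.denom ≠ 0 := fun h0 => RatFunc.denom_ne_zero g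
    (τ.injective (h0.trans (map_zero τ).symm))
  have hcop : IsCoprime (τ g.num) (τ g.denom) :=
    (RatFunc.isCoprime_num_denom g).map (τ : Polynomial F →+* Polynomial F)
  set w := gcd (τ g.num) (τ g.denom) with hw
  have hwu : IsUnit w := (gcd_isUnit_iff (τ g.num) (τ g.denom)).mpr hcop
  have hsplit : w * (τ g.denom / w) = τ g.denom :=
    EuclideanDomain.mul_div_cancel' hwu.ne_zero (gcd_dvd_right _ _)
  have hqs_div : qs ∣ τ g.denom / w := by
    have h1 : qs ∣ w * (τ g.denom / w) := by rw [hsplit]; exact hqs_τD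
    rcases (hqs_prime.2.2 _ _ h1) with h | h
    · exact absurd (isUnit_of_dvd_unit h hwu) hqs_prime.not_unit
    · exact h
  have hdenomσg : qs ∣ (σ g).denom := by
    rw [hσg, RatFunc.denom_div _ hτD0]
    exact hqs_div.mul_left _
  have hchain : (σ g).denom ∣ (σ g - g).denom * g.denom := by
    have h := RatFunc.denom_add_dvd (σ g - g) g
    rwa [sub_add_cancel] at h
  rcases hqs_prime.2.2 _ _ (hdenomσg.trans hchain) with h | h
  · exact h
  · exact absurd h hqs_den
end
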